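/- arXiv:2604.12010 — 2 statements merged into one kernel-verified Lean document; each statement's English description precedes it below -/
import Mathlib

section
/- There exists a sequence (xₖ, yₖ) in {(x,y) : x ≥ 0, y ≥ 0, x + y < 1} such that (1-xₖ-yₖ)^2 · yₖ / ((1-xₖ)^3 · (1-yₖ)^2) tends to 4/27; in fact one may take xₖ → 1 and yₖ = (1-xₖ)/3. -/
open Filter Topology

theorem stmt2 :
    ∃ x y : ℕ → ℝ,
      (∀ k, 0 ≤ x k ∧ 0 ≤ y k ∧ x k + y k < 1) ∧
      (∀ k, y k = (1 - x k) / 3) ∧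
      Tendsto x atTop (𝓝 1) ∧
      Tendsto (fun k =>
          (1 - x k - y k) ^ 2 * y k / ((1 - x k) ^ 3 * (1 - y k) ^ 2))
        atTop (𝓝 (4 / 27)) := by
  refine ⟨fun k => 1 - 1 / (k + 1), fun k => 1 / (3 * (k + 1)), ?_, ?_, ?_, ?_⟩
  · intro k
    have hk : (0:ℝ) < (k:ℝ) + 1 := by positivity
    have h1 : (1:ℝ) / (k + 1) ≤ 1 := by
      rw [div_le_one hk]; linarith [Nat.cast_nonneg (α := ℝ) k]
    refine ⟨by linarith, by positivity, ?_⟩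
    have : (0:ℝ) < 1 / (3 * (k + 1)) := by positivity
    have h2 : (1:ℝ) / (3 * (k + 1)) < 1 / (k + 1) := by
      apply div_lt_div_of_pos_left one_pos hk; linarith
    linarith
  · intro k
    have hk : ((k:ℝ) + 1) ≠ 0 := by positivity
    field_simp
    ring
  · have ht : Tendsto (fun k : ℕ => 1 / ((k:ℝ) + 1)) atTop (𝓝 0) :=
      tendsto_one_div_add_atTop_nhds_zero_nat
    have := ht.const_sub 1
    simpa using this
  · have ht : Tendsto (fun k : ℕ => 1 / ((k:ℝ) + 1)) atTop (𝓝 0) :=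
      tendsto_one_div_add_atTop_nhds_zero_nat
    have heq : (fun k : ℕ =>
        (1 - (1 - 1 / ((k:ℝ) + 1)) - 1 / (3 * (k + 1))) ^ 2 * (1 / (3 * (k + 1))) /
          ((1 - (1 - 1 / ((k:ℝ) + 1))) ^ 3 * (1 - 1 / (3 * (k + 1))) ^ 2)) =
        fun k : ℕ => (4 / 27) / (1 - (1 / ((k:ℝ) + 1)) / 3) ^ 2 := by
      funext k
      have hk : (0:ℝ) < (k:ℝ) + 1 := by positivity
      have hk' : ((k:ℝ) + 1) ≠ 0 := ne_of_gt hk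
      have h3 : (1:ℝ) - (1 / ((k:ℝ) + 1)) / 3 ≠ 0 := by
        have : (1:ℝ) / ((k:ℝ) + 1) ≤ 1 := by
          rw [div_le_one hk]; linarith [Nat.cast_nonneg (α := ℝ) k]
        have h0 : (0:ℝ) < 1 / ((k:ℝ) + 1) := by positivity
        nlinarith
      have hu0 : (0:ℝ) < 1 / ((k:ℝ) + 1) := by positivity
      have hA : (0:ℝ) < 1 - 1 / (3 * ((k:ℝ) + 1)) := by
        have h31 : (1:ℝ) / (3 * ((k:ℝ) + 1)) < 1 := by
          rw [div_lt_one (by positivity)]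
          linarith [Nat.cast_nonneg (α := ℝ) k]
        linarith
      have hD1 : (1 - (1 - 1 / ((k:ℝ) + 1))) ^ 3 * (1 - 1 / (3 * ((k:ℝ) + 1))) ^ 2 ≠ 0 := by
        have h1 : 1 - (1 - 1 / ((k:ℝ) + 1)) = 1 / ((k:ℝ) + 1) := by ring
        rw [h1]
        exact ne_of_gt (mul_pos (pow_pos hu0 3) (pow_pos hA 2))
      have hD2 : ((1:ℝ) - (1 / ((k:ℝ) + 1)) / 3) ^ 2 ≠ 0 := pow_ne_zero 2 h3
      rw [div_eq_div_iff hD1 hD2]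
      field_simp
      ring
    rw [heq]
    have : Tendsto (fun k : ℕ => (4 / 27 : ℝ) / (1 - (1 / ((k:ℝ) + 1)) / 3) ^ 2)
        atTop (𝓝 ((4 / 27) / (1 - 0 / 3) ^ 2)) := by
      apply Tendsto.div tendsto_const_nhds
      · exact (((tendsto_const_nhds.sub (ht.div_const 3))).pow 2)
      · norm_num
    simpa using this
end

section
/- If f : 𝔻 → ℂ is holomorphic, univalent, and maps the unit disk onto a convex domain, then sup_{z∈𝔻} (1-|z|²)² |S_f(z)| ≤ 2, where S_f = (f''/f')' - (1/2)(f''/f')². -/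
open Metric

/-- The classical Schwarzian derivative `S_f = (f''/f')' - (1/2)(f''/f')²`. -/
noncomputable def schwarzian (f : ℂ → ℂ) (z : ℂ) : ℂ :=
  deriv (fun w => deriv (deriv f) w / deriv f w) z
    - (deriv (deriv f) z / deriv f z) ^ 2 / 2

/-!
Write `p = f'' / f'`. Convexity of `f(𝔻)` gives `Re (1 + z p(z)) ≥ 0`: the midpoint of
`f(z e^{iα})` and `f(z e^{-iα})` lies in `f(𝔻)`, so its preimage `u(α)` is the value at `z` of a
self-map of the disk fixing `0`, whence `|u(α)| ≤ |z| = |u(0)|` by the Schwarz lemma, and the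
second-derivative test for `|u|²` at `α = 0` is exactly `|z|² Re (1 + z p(z)) ≥ 0`.
Then `ψ = p / (2 + z p)` satisfies `|z ψ| ≤ 1`, hence `|ψ| ≤ 1` by the Schwarz lemma, while
`S_f = p' - p² / 2 = ψ' (2 + z p)² / 2` and `(1 - z ψ)(2 + z p) = 2`; the Schwarz–Pick lemma for `ψ`
together with `(1 - |z|²)(1 - |ψ|²) ≤ |1 - z ψ|²` gives `(1 - |z|²)² |S_f| ≤ 2`.
Injectivity is used through `f' ≠ 0` (at a critical point `f` would be locally `n`-to-one) and
the resulting holomorphy of `f⁻¹` on `f(𝔻)`.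
-/

open Set Filter Complex
open scoped Topology ComplexConjugate

theorem AnalyticAt.exists_eventually_pow_eq {g : ℂ → ℂ} {z₀ : ℂ} (hg : AnalyticAt ℂ g z₀)
    (hg₀ : g z₀ ≠ 0) {n : ℕ} (hn : n ≠ 0) :
    ∃ ρ : ℂ → ℂ, AnalyticAt ℂ ρ z₀ ∧ ρ z₀ ≠ 0 ∧ ∀ᶠ z in 𝓝 z₀, ρ z ^ n = g z := by
  have hroot : ∀ w : ℂ, w ≠ 0 → cexp (Complex.log w / n) ^ n = w := fun w hw => by
    rw [← Complex.exp_nat_mul, mul_div_cancel₀ _ (Nat.cast_ne_zero.mpr hn), exp_log hw]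
  -- dividing by `g z₀` keeps the logarithm near `1`, inside its slit plane
  have hlog : AnalyticAt ℂ (fun z => Complex.log (g z / g z₀)) z₀ :=
    (hg.div analyticAt_const hg₀).clog (by simp [hg₀, one_mem_slitPlane])
  refine ⟨fun z => cexp (Complex.log (g z / g z₀) / n) * cexp (Complex.log (g z₀) / n),
    ((hlog.div analyticAt_const (Nat.cast_ne_zero.mpr hn)).cexp).mul analyticAt_const,
    mul_ne_zero (exp_ne_zero _) (exp_ne_zero _), ?_⟩
  filter_upwards [hg.continuousAt.eventually_ne hg₀] with z hz
  rw [mul_pow, hroot _ (div_ne_zero hz hg₀), hroot _ hg₀, div_mul_cancel₀ _ hg₀]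

theorem not_injOn_of_eventually_eq_pow {φ h : ℂ → ℂ} {φ' z₀ : ℂ} {s : Set ℂ} {n : ℕ}
    (hφ : HasStrictDerivAt φ φ' z₀) (hφ' : φ' ≠ 0) (hφ₀ : φ z₀ = 0)
    (hh : ∀ᶠ z in 𝓝 z₀, h z = φ z ^ n) (hn : 2 ≤ n) (hs : s ∈ 𝓝 z₀) : ¬ InjOn h s := by
  intro hinj
  have hζ := Complex.isPrimitiveRoot_exp n (by omega)
  set ζ := cexp (2 * Real.pi * I / n)
  have himage : φ '' {z ∈ s | h z = φ z ^ n} ∈ 𝓝 0 := by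
    rw [← hφ₀, ← hφ.map_nhds_eq hφ']
    exact image_mem_map (inter_mem hs hh)
  have hrot : Tendsto (ζ * ·) (𝓝 0) (𝓝 0) := by
    simpa using (continuous_const_mul ζ).tendsto 0
  have hsmall : ∀ᶠ w in 𝓝[≠] (0 : ℂ),
      (w ∈ φ '' {z ∈ s | h z = φ z ^ n} ∧ ζ * w ∈ φ '' {z ∈ s | h z = φ z ^ n}) ∧ w ≠ 0 :=
    (show ∀ᶠ w in 𝓝 (0 : ℂ), _ from inter_mem himage (hrot himage)).filter_mono
      nhdsWithin_le_nhds |>.and self_mem_nhdsWithin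
  -- a small `w ≠ 0` with `w = φ a` and `ζ w = φ b` gives `h a = w ^ n = h b`
  obtain ⟨_, ⟨⟨a, ⟨has, ha⟩, rfl⟩, b, ⟨hbs, hb⟩, hab⟩, hw⟩ := hsmall.exists
  have hab' : a = b := hinj has hbs (by rw [ha, hb, hab, mul_pow, hζ.pow_eq_one, one_mul])
  have : (ζ - 1) * φ a = 0 := by rw [sub_mul, ← hab, hab', one_mul, sub_self]
  rcases mul_eq_zero.mp this with h1 | h1
  · exact hζ.ne_one (by omega) (sub_eq_zero.mp h1)
  · exact hw h1

theorem AnalyticAt.not_injOn_of_deriv_eq_zero {f : ℂ → ℂ} {z₀ : ℂ} {s : Set ℂ}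
    (hf : AnalyticAt ℂ f z₀) (hf' : deriv f z₀ = 0) (hs : s ∈ 𝓝 z₀) : ¬ InjOn f s := by
  intro hinj
  have hh : AnalyticAt ℂ (f · - f z₀) z₀ := hf.sub analyticAt_const
  cases hord : analyticOrderAt (f · - f z₀) z₀ with
  | top =>
    rw [analyticOrderAt_eq_top] at hord
    have : ∀ᶠ z in 𝓝[≠] z₀, (f z - f z₀ = 0 ∧ z ∈ s) ∧ z ≠ z₀ :=
      ((hord.and hs).filter_mono nhdsWithin_le_nhds).and self_mem_nhdsWithin
    obtain ⟨z, ⟨hz, hzs⟩, hne⟩ := this.exists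
    exact hne (hinj hzs (mem_of_mem_nhds hs) (sub_eq_zero.mp hz))
  | coe n =>
    have hn : 2 ≤ n := by
      have : ((2 : ℕ) : ℕ∞) ≤ analyticOrderAt (f · - f z₀) z₀ := by
        refine (natCast_le_analyticOrderAt_iff_iteratedDeriv_eq_zero hh).mpr fun i hi => ?_
        interval_cases i
        · simp
        · simpa [iteratedDeriv_one] using hf'
      rw [hord] at this
      exact_mod_cast this
    obtain ⟨g, hg, hg₀, hfac⟩ := hh.analyticOrderAt_eq_natCast.mp hord
    obtain ⟨ρ, hρ, hρ₀, hρn⟩ := hg.exists_eventually_pow_eq hg₀ (n := n) (by omega)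
    have hφ : HasStrictDerivAt (fun z => (z - z₀) * ρ z) (ρ z₀) z₀ := by
      simpa using ((hasStrictDerivAt_id z₀).fun_sub (hasStrictDerivAt_const z₀ z₀)).fun_mul
        hρ.hasStrictDerivAt
    refine not_injOn_of_eventually_eq_pow (h := (f · - f z₀)) hφ hρ₀ (by simp) ?_ hn hs
      fun a ha b hb hab => hinj ha hb (sub_left_inj.mp hab)
    filter_upwards [hfac, hρn] with z hz hρz
    rw [hz, smul_eq_mul, mul_pow, hρz]

theorem deriv_ne_zero_of_injOn {f : ℂ → ℂ} {s : Set ℂ} {z : ℂ} (hs : IsOpen s)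
    (hd : DifferentiableOn ℂ f s) (hinj : InjOn f s) (hz : z ∈ s) : deriv f z ≠ 0 :=
  fun h => (hd.analyticAt (hs.mem_nhds hz)).not_injOn_of_deriv_eq_zero h (hs.mem_nhds hz) hinj

theorem hasDerivAt_invFunOn_of_injOn {f : ℂ → ℂ} {s : Set ℂ} {z : ℂ} (hs : IsOpen s)
    (hd : DifferentiableOn ℂ f s) (hinj : InjOn f s) (hz : z ∈ s) :
    HasDerivAt (Function.invFunOn f s) (deriv f z)⁻¹ (f z) := by
  have hf' := deriv_ne_zero_of_injOn hs hd hinj hz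
  have hf : HasStrictDerivAt f (deriv f z) z := (hd.analyticAt (hs.mem_nhds hz)).hasStrictDerivAt
  set l := hf.localInverse f (deriv f z) z hf'
  have hloc : Function.invFunOn f s =ᶠ[𝓝 (f z)] l := by
    have hequiv := hf.hasStrictFDerivAt_equiv hf'
    filter_upwards [hequiv.eventually_right_inverse,
      hequiv.localInverse_tendsto.eventually (hs.eventually_mem hz)] with w hw hws
    calc Function.invFunOn f s w = Function.invFunOn f s (f (l w)) := by rw [hw]
      _ = l w := hinj.leftInvOn_invFunOn hws
  exact (hf.to_localInverse hf').hasDerivAt.congr_of_eventuallyEq hloc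

theorem deriv_deriv_nonpos_of_isLocalMax {q : ℝ → ℝ} {x₀ : ℝ} (hmax : IsLocalMax q x₀)
    (hc : ContinuousAt q x₀) : deriv (deriv q) x₀ ≤ 0 := by
  by_contra! hpos
  -- a positive second derivative would make `x₀` a local minimum too, so `q` is locally constant
  have hconst : q =ᶠ[𝓝 x₀] fun _ => q x₀ :=
    ((isLocalMin_of_deriv_deriv_pos hpos hmax.deriv_eq_zero hc).and hmax).mono
      fun x hx => le_antisymm hx.2 hx.1
  have hderiv : deriv q =ᶠ[𝓝 x₀] fun _ => 0 :=
    hconst.eventuallyEq_nhds.mono fun x hx => by rw [hx.deriv_eq, deriv_const]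
  rw [hderiv.deriv_eq, deriv_const] at hpos
  exact lt_irrefl _ hpos

theorem inner_add_norm_sq_nonpos_of_isLocalMax_norm {F : Type*} [NormedAddCommGroup F]
    [InnerProductSpace ℝ F] {u v : ℝ → F} {w : F} {x₀ : ℝ} (hmax : IsLocalMax (‖u ·‖) x₀)
    (hu : ∀ᶠ x in 𝓝 x₀, HasDerivAt u (v x) x) (hv : HasDerivAt v w x₀) :
    inner ℝ (u x₀) w + ‖v x₀‖ ^ 2 ≤ 0 := by
  have hmax_sq : IsLocalMax (‖u ·‖ ^ 2) x₀ :=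
    hmax.mono fun x hx => pow_le_pow_left₀ (norm_nonneg _) hx 2
  have hderiv : deriv (‖u ·‖ ^ 2) =ᶠ[𝓝 x₀] fun x => 2 * inner ℝ (u x) (v x) :=
    hu.mono fun x hx => hx.norm_sq.deriv
  have hderiv2 : HasDerivAt (fun x => 2 * inner ℝ (u x) (v x))
      (2 * (inner ℝ (u x₀) w + ‖v x₀‖ ^ 2)) x₀ := by
    simpa [real_inner_self_eq_norm_sq] using (hu.self_of_nhds.inner ℝ hv).const_mul 2
  have := deriv_deriv_nonpos_of_isLocalMax hmax_sq hu.self_of_nhds.norm_sq.continuousAt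
  rw [hderiv.deriv_eq, hderiv2.deriv] at this
  linarith

noncomputable def rotationMean (F : ℂ → ℂ) (α : ℝ) (z : ℂ) : ℂ :=
  (F (z * cexp (α * I)) + F (z * cexp (↑(-α) * I))) / 2

noncomputable def rotationDiff (F : ℂ → ℂ) (α : ℝ) (z : ℂ) : ℂ :=
  (F (z * cexp (α * I)) - F (z * cexp (↑(-α) * I))) / 2

@[simp]
theorem rotationMean_zero (F : ℂ → ℂ) (z : ℂ) : rotationMean F 0 z = F z := by
  simp [rotationMean]

@[simp]
theorem rotationDiff_zero (F : ℂ → ℂ) (z : ℂ) : rotationDiff F 0 z = 0 := by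
  simp [rotationDiff]

theorem mul_cexp_ofReal_mul_I_mem_ball {z : ℂ} {r : ℝ} (hz : z ∈ ball (0 : ℂ) r) (t : ℝ) :
    z * cexp (t * I) ∈ ball (0 : ℂ) r := by
  simpa [norm_exp_ofReal_mul_I] using hz

theorem hasDerivAt_comp_mul_cexp {F : ℂ → ℂ} {z : ℂ} {α : ℝ}
    (hF : DifferentiableAt ℂ F (z * cexp (α * I))) :
    HasDerivAt (fun t : ℝ => F (z * cexp (t * I)))
      (I * (z * cexp (α * I)) * deriv F (z * cexp (α * I))) α := by
  have hcurve : HasDerivAt (fun t : ℝ => z * cexp (t * I)) (I * (z * cexp (α * I))) α := by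
    refine (((hasDerivAt_id (α : ℂ)).mul_const I).cexp.comp_ofReal.const_mul z).congr_deriv ?_
    simp only [id_eq, one_mul]
    ring
  exact mul_comm (deriv F _) _ ▸ hF.hasDerivAt.comp α hcurve

section Rotation

variable {F : ℂ → ℂ} {z : ℂ}

theorem hasDerivAt_rotationMean (hF : ∀ t : ℝ, DifferentiableAt ℂ F (z * cexp (t * I)))
    (α : ℝ) :
    HasDerivAt (rotationMean F · z) (rotationDiff (fun w => I * w * deriv F w) α z) α := by
  have hneg := (hasDerivAt_comp_mul_cexp (hF (-α))).scomp α (hasDerivAt_neg α)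
  refine (((hasDerivAt_comp_mul_cexp (hF α)).add hneg).div_const 2).congr_deriv ?_
  simp [rotationDiff, sub_eq_add_neg]

theorem hasDerivAt_rotationDiff (hF : ∀ t : ℝ, DifferentiableAt ℂ F (z * cexp (t * I)))
    (α : ℝ) :
    HasDerivAt (rotationDiff F · z) (rotationMean (fun w => I * w * deriv F w) α z) α := by
  have hneg := (hasDerivAt_comp_mul_cexp (hF (-α))).scomp α (hasDerivAt_neg α)
  refine (((hasDerivAt_comp_mul_cexp (hF α)).sub hneg).div_const 2).congr_deriv ?_
  simp [rotationMean]

end Rotation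

theorem DifferentiableOn.differentiableAt_mul_cexp {F : ℂ → ℂ} {r : ℝ}
    (hF : DifferentiableOn ℂ F (ball (0 : ℂ) r)) {z : ℂ} (hz : z ∈ ball (0 : ℂ) r) (t : ℝ) :
    DifferentiableAt ℂ F (z * cexp (t * I)) :=
  hF.differentiableAt (isOpen_ball.mem_nhds (mul_cexp_ofReal_mul_I_mem_ball hz t))

section ConvexImage

variable {f : ℂ → ℂ}

theorem rotationMean_mem_image (hconv : Convex ℝ (f '' ball (0 : ℂ) 1)) {z : ℂ}
    (hz : z ∈ ball (0 : ℂ) 1) (α : ℝ) : rotationMean f α z ∈ f '' ball (0 : ℂ) 1 := by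
  have := hconv (mem_image_of_mem f (mul_cexp_ofReal_mul_I_mem_ball hz α))
    (mem_image_of_mem f (mul_cexp_ofReal_mul_I_mem_ball hz (-α)))
    (by norm_num : (0 : ℝ) ≤ 1 / 2) (by norm_num : (0 : ℝ) ≤ 1 / 2) (by norm_num)
  convert this using 1
  simp only [rotationMean, Complex.real_smul]
  push_cast
  ring

theorem norm_invFunOn_rotationMean_le (hd : DifferentiableOn ℂ f (ball (0 : ℂ) 1))
    (hinj : InjOn f (ball (0 : ℂ) 1)) (hconv : Convex ℝ (f '' ball (0 : ℂ) 1)) (α : ℝ)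
    {z : ℂ} (hz : z ∈ ball (0 : ℂ) 1) :
    ‖Function.invFunOn f (ball (0 : ℂ) 1) (rotationMean f α z)‖ ≤ ‖z‖ := by
  have hmean : DifferentiableOn ℂ (rotationMean f α) (ball (0 : ℂ) 1) :=
    ((hd.comp (differentiableOn_id.mul_const _)
        fun w hw => mul_cexp_ofReal_mul_I_mem_ball hw α).add
      (hd.comp (differentiableOn_id.mul_const _)
        fun w hw => mul_cexp_ofReal_mul_I_mem_ball hw (-α))).div_const 2
  have hinv : DifferentiableOn ℂ (Function.invFunOn f (ball 0 1)) (f '' ball 0 1) := by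
    rintro _ ⟨w, hw, rfl⟩
    exact (hasDerivAt_invFunOn_of_injOn isOpen_ball hd hinj hw).differentiableAt
      |>.differentiableWithinAt
  refine Complex.norm_le_norm_of_mapsTo_ball
    (hinv.comp hmean fun w hw => rotationMean_mem_image hconv hw α)
    (fun w hw => ball_subset_closedBall
      (Function.invFunOn_mem (rotationMean_mem_image hconv hw α)))
    ?_ (mem_ball_zero_iff.mp hz)
  simpa [rotationMean] using hinj.leftInvOn_invFunOn (mem_ball_self one_pos)

theorem hasDerivAt_invFunOn_rotationMean (hd : DifferentiableOn ℂ f (ball (0 : ℂ) 1))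
    (hinj : InjOn f (ball (0 : ℂ) 1)) (hconv : Convex ℝ (f '' ball (0 : ℂ) 1)) {z : ℂ}
    (hz : z ∈ ball (0 : ℂ) 1) (α : ℝ) :
    HasDerivAt (fun t => Function.invFunOn f (ball 0 1) (rotationMean f t z))
      ((deriv f (Function.invFunOn f (ball 0 1) (rotationMean f α z)))⁻¹ *
        rotationDiff (fun w => I * w * deriv f w) α z) α := by
  have hmem := rotationMean_mem_image hconv hz α
  have hinv := hasDerivAt_invFunOn_of_injOn isOpen_ball hd hinj (Function.invFunOn_mem hmem)
  rw [Function.invFunOn_eq hmem] at hinv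
  exact hinv.comp α (hasDerivAt_rotationMean (hd.differentiableAt_mul_cexp hz) α)

theorem re_one_add_mul_deriv_deriv_div_deriv_nonneg
    (hd : DifferentiableOn ℂ f (ball (0 : ℂ) 1)) (hinj : InjOn f (ball (0 : ℂ) 1))
    (hconv : Convex ℝ (f '' ball (0 : ℂ) 1)) {z : ℂ} (hz : z ∈ ball (0 : ℂ) 1) :
    0 ≤ (1 + z * (deriv (deriv f) z / deriv f z)).re := by
  have hf := hd.analyticOnNhd isOpen_ball
  set G : ℂ → ℂ := fun w => I * w * deriv f w
  have hG : HasDerivAt G (I * deriv f z + I * z * deriv (deriv f) z) z := by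
    refine (((hasDerivAt_id z).const_mul I).mul
      (hf.deriv z hz).differentiableAt.hasDerivAt).congr_deriv ?_
    simp
  have hGd : DifferentiableOn ℂ G (ball 0 1) := fun w hw =>
    ((differentiableAt_id.const_mul I).mul (hf.deriv w hw).differentiableAt)
      |>.differentiableWithinAt
  set u : ℝ → ℂ := fun α => Function.invFunOn f (ball 0 1) (rotationMean f α z)
  have hu0 : u 0 = z := by
    simp only [u, rotationMean_zero]
    exact hinj.leftInvOn_invFunOn hz
  have hu := hasDerivAt_invFunOn_rotationMean hd hinj hconv hz
  set v : ℝ → ℂ := fun α => (deriv f (u α))⁻¹ * rotationDiff G α z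
  have hv : HasDerivAt v ((deriv f z)⁻¹ * (I * z * deriv G z)) 0 := by
    have hu0D : u 0 ∈ ball (0 : ℂ) 1 := hu0 ▸ hz
    have hinv := ((hf.deriv _ hu0D).differentiableAt.hasDerivAt.comp 0 (hu 0)).inv
      (deriv_ne_zero_of_injOn isOpen_ball hd hinj hu0D)
    refine (hinv.mul (hasDerivAt_rotationDiff (hGd.differentiableAt_mul_cexp hz) 0)).congr_deriv
      ?_
    simp [hu0]
  have key : inner ℝ (u 0) _ + ‖v 0‖ ^ 2 ≤ 0 := inner_add_norm_sq_nonpos_of_isLocalMax_norm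
    (Eventually.of_forall fun α => (norm_invFunOn_rotationMean_le hd hinj hconv α hz).trans_eq
      (congrArg norm hu0).symm) (Eventually.of_forall hu) hv
  have hW : (deriv f z)⁻¹ * (I * z * deriv G z) * conj z
      = ((-normSq z : ℝ) : ℂ) * (1 + z * (deriv (deriv f) z / deriv f z)) := by
    have hf' := deriv_ne_zero_of_injOn isOpen_ball hd hinj hz
    rw [hG.deriv]
    field_simp
    push_cast
    linear_combination (z * deriv f z + z ^ 2 * deriv (deriv f) z) * conj z * I_sq
      - (deriv f z + z * deriv (deriv f) z) * mul_conj z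
  rw [hu0, show v 0 = 0 by simp [v], Complex.inner, hW, re_ofReal_mul] at key
  rcases eq_or_ne z 0 with rfl | hz0
  · simp
  · nlinarith [normSq_pos.mpr hz0]

end ConvexImage

theorem normSq_one_sub_conj_mul_sub_normSq_sub (c w : ℂ) :
    normSq (1 - conj c * w) - normSq (c - w) = (1 - normSq c) * (1 - normSq w) := by
  simp only [normSq_apply, sub_re, sub_im, mul_re, mul_im, conj_re, conj_im, one_re, one_im]
  ring

noncomputable def diskSwap (c w : ℂ) : ℂ := (c - w) / (1 - conj c * w)

section DiskSwap

variable {c w : ℂ}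

theorem one_sub_conj_mul_ne_zero (hc : ‖c‖ < 1) (hw : ‖w‖ ≤ 1) : 1 - conj c * w ≠ 0 := by
  intro h
  have : ‖conj c * w‖ = 1 := by rw [← sub_eq_zero.mp h, norm_one]
  rw [norm_mul, norm_conj] at this
  nlinarith [norm_nonneg c, norm_nonneg w]

theorem norm_sub_le_norm_one_sub_conj_mul (hc : ‖c‖ < 1) (hw : ‖w‖ ≤ 1) :
    ‖c - w‖ ≤ ‖1 - conj c * w‖ := by
  rw [← sq_le_sq₀ (norm_nonneg _) (norm_nonneg _), Complex.sq_norm, Complex.sq_norm]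
  have := normSq_one_sub_conj_mul_sub_normSq_sub c w
  rw [← Complex.sq_norm c, ← Complex.sq_norm w] at this
  have hc' : 0 ≤ 1 - ‖c‖ ^ 2 := by nlinarith [norm_nonneg c]
  have hw' : 0 ≤ 1 - ‖w‖ ^ 2 := by nlinarith [norm_nonneg w]
  linarith [mul_nonneg hc' hw']

theorem norm_sub_lt_norm_one_sub_conj_mul (hc : ‖c‖ < 1) (hw : ‖w‖ < 1) :
    ‖c - w‖ < ‖1 - conj c * w‖ := by
  rw [← sq_lt_sq₀ (norm_nonneg _) (norm_nonneg _), Complex.sq_norm, Complex.sq_norm]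
  have := normSq_one_sub_conj_mul_sub_normSq_sub c w
  rw [← Complex.sq_norm c, ← Complex.sq_norm w] at this
  have hc' : 0 < 1 - ‖c‖ ^ 2 := by nlinarith [norm_nonneg c]
  have hw' : 0 < 1 - ‖w‖ ^ 2 := by nlinarith [norm_nonneg w]
  linarith [mul_pos hc' hw']

theorem diskSwap_mem_ball (hc : ‖c‖ < 1) (hw : w ∈ ball (0 : ℂ) 1) :
    diskSwap c w ∈ ball (0 : ℂ) 1 := by
  rw [mem_ball_zero_iff] at hw ⊢
  rw [diskSwap, norm_div, div_lt_one (norm_pos_iff.mpr (one_sub_conj_mul_ne_zero hc hw.le))]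
  exact norm_sub_lt_norm_one_sub_conj_mul hc hw

theorem diskSwap_mem_closedBall (hc : ‖c‖ < 1) (hw : w ∈ closedBall (0 : ℂ) 1) :
    diskSwap c w ∈ closedBall (0 : ℂ) 1 := by
  rw [mem_closedBall_zero_iff] at hw ⊢
  rw [diskSwap, norm_div, div_le_one (norm_pos_iff.mpr (one_sub_conj_mul_ne_zero hc hw))]
  exact norm_sub_le_norm_one_sub_conj_mul hc hw

theorem hasDerivAt_diskSwap (h : 1 - conj c * w ≠ 0) :
    HasDerivAt (diskSwap c) ((normSq c - 1) / (1 - conj c * w) ^ 2) w := by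
  refine (((hasDerivAt_id w).const_sub c).div
    (((hasDerivAt_id w).const_mul (conj c)).const_sub 1) h).congr_deriv ?_
  rw [← mul_conj c]
  simp only [id_eq]
  ring

theorem differentiableOn_diskSwap (hc : ‖c‖ < 1) :
    DifferentiableOn ℂ (diskSwap c) (closedBall 0 1) := fun _ hx =>
  (hasDerivAt_diskSwap (one_sub_conj_mul_ne_zero hc (mem_closedBall_zero_iff.mp hx))
    ).differentiableAt.differentiableWithinAt

@[simp]
theorem diskSwap_zero (c : ℂ) : diskSwap c 0 = c := by simp [diskSwap]

@[simp]
theorem diskSwap_self (c : ℂ) : diskSwap c c = 0 := by simp [diskSwap]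

theorem hasDerivAt_diskSwap_zero (c : ℂ) : HasDerivAt (diskSwap c) (normSq c - 1) 0 := by
  simpa using hasDerivAt_diskSwap (c := c) (w := 0) (by simp)

theorem hasDerivAt_diskSwap_self (hc : ‖c‖ < 1) :
    HasDerivAt (diskSwap c) (normSq c - 1)⁻¹ c := by
  refine (hasDerivAt_diskSwap (one_sub_conj_mul_ne_zero hc hc.le)).congr_deriv ?_
  have h : (normSq c : ℂ) - 1 ≠ 0 := by
    rw [← ofReal_one, ← ofReal_sub, ofReal_ne_zero, normSq_eq_norm_sq]
    nlinarith [norm_nonneg c]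
  rw [← normSq_eq_conj_mul_self, ← neg_sub (normSq c : ℂ) 1, neg_sq, sq, div_mul_cancel_left₀ h]

theorem HasDerivAt.diskSwap_comp {F : ℂ → ℂ} {F' a : ℂ} (hF : HasDerivAt F F' a)
    (hb : ‖F a‖ < 1) :
    HasDerivAt (fun w => diskSwap (F a) (F (diskSwap a w)))
      (F' * ((1 - ‖a‖ ^ 2) / (1 - ‖F a‖ ^ 2) : ℝ)) 0 := by
  have hF₀ : HasDerivAt F F' (diskSwap a 0) := by rwa [diskSwap_zero]
  have hσ : HasDerivAt (diskSwap (F a)) (normSq (F a) - 1)⁻¹ (F (diskSwap a 0)) := by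
    rw [diskSwap_zero]
    exact hasDerivAt_diskSwap_self hb
  refine (hσ.comp 0 (hF₀.comp 0 (hasDerivAt_diskSwap_zero a))).congr_deriv ?_
  have h₁ : (1 - ‖F a‖ ^ 2 : ℂ) ≠ 0 := by
    exact_mod_cast (by nlinarith [norm_nonneg (F a)] : 1 - ‖F a‖ ^ 2 ≠ 0)
  have h₂ : (‖F a‖ ^ 2 - 1 : ℂ) ≠ 0 := by
    rw [← neg_sub]
    exact neg_ne_zero.mpr h₁
  rw [normSq_eq_norm_sq, normSq_eq_norm_sq]
  push_cast
  field_simp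
  ring

end DiskSwap

theorem norm_deriv_mul_le_of_mapsTo_closedBall {F : ℂ → ℂ}
    (hF : DifferentiableOn ℂ F (ball (0 : ℂ) 1))
    (hmaps : MapsTo F (ball (0 : ℂ) 1) (closedBall 0 1))
    {a : ℂ} (ha : a ∈ ball (0 : ℂ) 1) : ‖deriv F a‖ * (1 - ‖a‖ ^ 2) ≤ 1 - ‖F a‖ ^ 2 := by
  have ha' : ‖a‖ < 1 := mem_ball_zero_iff.mp ha
  rcases (mem_closedBall_zero_iff.mp (hmaps ha)).lt_or_eq with hb | hb
  · set b := F a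
    set Φ : ℂ → ℂ := fun w => diskSwap b (F (diskSwap a w))
    have hΦ : DifferentiableOn ℂ Φ (ball 0 1) :=
      (differentiableOn_diskSwap hb).comp
        (hF.comp ((differentiableOn_diskSwap ha').mono ball_subset_closedBall)
          fun w hw => diskSwap_mem_ball ha' hw)
        fun w hw => hmaps (diskSwap_mem_ball ha' hw)
    have hΦmaps : MapsTo Φ (ball 0 1) (closedBall (Φ 0) 1) := by
      intro w hw
      simpa [Φ, b] using diskSwap_mem_closedBall hb (hmaps (diskSwap_mem_ball ha' hw))
    have hb₁ : 0 < 1 - ‖b‖ ^ 2 := by nlinarith [norm_nonneg b]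
    have ha₁ : 0 < 1 - ‖a‖ ^ 2 := by nlinarith [norm_nonneg a]
    have hΦ' := (hF.differentiableAt (isOpen_ball.mem_nhds ha)).hasDerivAt.diskSwap_comp hb
    have := Complex.norm_deriv_le_div_of_mapsTo_ball hΦ hΦmaps one_pos
    rw [hΦ'.deriv, norm_mul, norm_real, Real.norm_of_nonneg (div_pos ha₁ hb₁).le, div_one,
      mul_div_assoc', div_le_one hb₁] at this
    exact this
  · -- a maximum of `‖F‖` inside the disk makes `F` constant
    have hconst := Complex.eqOn_of_isPreconnected_of_isMaxOn_norm
      (convex_ball (0 : ℂ) 1).isPreconnected isOpen_ball hF ha fun w hw =>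
        show ‖F w‖ ≤ ‖F a‖ from hb ▸ mem_closedBall_zero_iff.mp (hmaps hw)
    have : deriv F a = 0 := by
      rw [(Filter.eventuallyEq_of_mem (isOpen_ball.mem_nhds ha) hconst).deriv_eq]
      exact deriv_const a (F a)
    simp [this, hb]

theorem norm_le_norm_two_add_of_re_nonneg {a : ℂ} (ha : 0 ≤ (1 + a).re) : ‖a‖ ≤ ‖2 + a‖ := by
  rw [← sq_le_sq₀ (norm_nonneg _) (norm_nonneg _), Complex.sq_norm, Complex.sq_norm]
  have : normSq (2 + a) - normSq a = 4 * (1 + a).re := by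
    simp only [normSq_apply, add_re, add_im, one_re]
    norm_num
    ring
  linarith

theorem one_sub_sq_norm_mul_one_sub_sq_norm_le (a b : ℂ) :
    (1 - ‖a‖ ^ 2) * (1 - ‖b‖ ^ 2) ≤ ‖1 - a * b‖ ^ 2 := by
  have h := abs_norm_sub_norm_le (1 : ℂ) (a * b)
  rw [norm_one, norm_mul] at h
  nlinarith [abs_le.mp h, sq_nonneg (‖a‖ - ‖b‖), abs_nonneg (1 - ‖a‖ * ‖b‖),
    sq_abs (1 - ‖a‖ * ‖b‖)]

theorem norm_le_one_of_norm_mul_le_one {ψ : ℂ → ℂ} (hψ : DifferentiableOn ℂ ψ (ball (0 : ℂ) 1))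
    (hle : ∀ w ∈ ball (0 : ℂ) 1, ‖w * ψ w‖ ≤ 1) {z : ℂ} (hz : z ∈ ball (0 : ℂ) 1) :
    ‖ψ z‖ ≤ 1 := by
  have hω : DifferentiableOn ℂ (fun w => w * ψ w) (ball 0 1) := differentiableOn_id.mul hψ
  have := Complex.norm_dslope_le_div_of_mapsTo_ball hω
    (fun w hw => by simpa using hle w hw) hz
  rcases eq_or_ne z 0 with rfl | hz0
  · have hderiv : HasDerivAt (fun w => w * ψ w) (ψ 0) 0 := by
      refine ((hasDerivAt_id (0 : ℂ)).mul
        (hψ.differentiableAt (isOpen_ball.mem_nhds hz)).hasDerivAt).congr_deriv ?_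
      simp
    simpa [dslope_same, hderiv.deriv] using this
  · simpa [dslope_of_ne _ hz0, slope_def_field, hz0] using this

theorem norm_deriv_sub_sq_div_two_le_of_re_nonneg {p : ℂ → ℂ}
    (hp : DifferentiableOn ℂ p (ball (0 : ℂ) 1))
    (hre : ∀ w ∈ ball (0 : ℂ) 1, 0 ≤ (1 + w * p w).re) {z : ℂ} (hz : z ∈ ball (0 : ℂ) 1) :
    (1 - ‖z‖ ^ 2) ^ 2 * ‖deriv p z - p z ^ 2 / 2‖ ≤ 2 := by
  set e : ℂ → ℂ := fun w => 2 + w * p w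
  have he : ∀ w ∈ ball (0 : ℂ) 1, e w ≠ 0 := fun w hw h => by
    have := hre w hw
    rw [show 1 + w * p w = e w - 1 by ring, h] at this
    norm_num at this
  set ψ : ℂ → ℂ := fun w => p w / e w
  have hψ : DifferentiableOn ℂ ψ (ball 0 1) :=
    hp.div ((differentiableOn_id.mul hp).const_add 2) he
  have hψle : ∀ w ∈ ball (0 : ℂ) 1, ‖ψ w‖ ≤ 1 := fun w hw => by
    refine norm_le_one_of_norm_mul_le_one hψ (fun x hx => ?_) hw
    rw [show x * ψ x = x * p x / e x from (mul_div_assoc _ _ _).symm, norm_div,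
      div_le_one (norm_pos_iff.mpr (he x hx))]
    exact norm_le_norm_two_add_of_re_nonneg (hre x hx)
  have hpick := norm_deriv_mul_le_of_mapsTo_closedBall hψ
    (fun w hw => mem_closedBall_zero_iff.mpr (hψle w hw)) hz
  have hS : deriv p z - p z ^ 2 / 2 = deriv ψ z * e z ^ 2 / 2 := by
    have hpz : HasDerivAt p (deriv p z) z :=
      (hp.differentiableAt (isOpen_ball.mem_nhds hz)).hasDerivAt
    have hez : HasDerivAt e (1 * p z + z * deriv p z) z := ((hasDerivAt_id z).mul hpz).const_add 2
    have hψz : HasDerivAt ψ _ z := hpz.div hez (he z hz)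
    rw [hψz.deriv]
    field_simp [he z hz]
    ring
  have hprod : ‖1 - z * ψ z‖ * ‖e z‖ = 2 := by
    rw [← norm_mul, sub_mul, one_mul, mul_assoc, div_mul_cancel₀ _ (he z hz),
      add_sub_cancel_right]
    norm_num
  have hz₁ : 0 ≤ 1 - ‖z‖ ^ 2 := by nlinarith [mem_ball_zero_iff.mp hz, norm_nonneg z]
  calc (1 - ‖z‖ ^ 2) ^ 2 * ‖deriv p z - p z ^ 2 / 2‖
      = (1 - ‖z‖ ^ 2) * (‖deriv ψ z‖ * (1 - ‖z‖ ^ 2)) * ‖e z‖ ^ 2 / 2 := by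
        rw [hS, norm_div, norm_mul, norm_pow]
        norm_num
        ring
    _ ≤ (1 - ‖z‖ ^ 2) * (1 - ‖ψ z‖ ^ 2) * ‖e z‖ ^ 2 / 2 := by gcongr
    _ ≤ ‖1 - z * ψ z‖ ^ 2 * ‖e z‖ ^ 2 / 2 := by
        gcongr
        exact one_sub_sq_norm_mul_one_sub_sq_norm_le z (ψ z)
    _ = 2 := by
        rw [← mul_pow, hprod]
        norm_num

/-- Chuaqui–Duren–Osgood: a convex univalent function on the disk has Schwarzian
norm at most 2. -/
theorem stmt14 (f : ℂ → ℂ)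
    (hd : DifferentiableOn ℂ f (ball (0 : ℂ) 1))
    (hinj : Set.InjOn f (ball (0 : ℂ) 1))
    (hconv : Convex ℝ (f '' ball (0 : ℂ) 1)) :
    ∀ z ∈ ball (0 : ℂ) 1,
      (1 - ‖z‖ ^ 2) ^ 2 * ‖schwarzian f z‖ ≤ 2 := by
  intro z hz
  have hf := hd.analyticOnNhd isOpen_ball
  have hpre : DifferentiableOn ℂ (fun w => deriv (deriv f) w / deriv f w) (ball 0 1) :=
    hf.deriv.deriv.differentiableOn.div hf.deriv.differentiableOn
      fun w hw => deriv_ne_zero_of_injOn isOpen_ball hd hinj hw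
  exact norm_deriv_sub_sq_div_two_le_of_re_nonneg hpre
    (fun w hw => re_one_add_mul_deriv_deriv_div_deriv_nonneg hd hinj hconv hw) hz
end
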